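/- Let (X, Y, ⟨·,·⟩) be a dual pairing and D ⊆ Z := X × Y a skew double-cone (ℝD = D and ⟨x,y⟩ = 0 for all (x,y) ∈ D). Then D is 3-monotone if and only if ⟨x, y'⟩ = 0 for every (x,y) ∈ D and (x',y') ∈ D (i.e., Pr_X(D) ⊥ Pr_Y(D)), and in that case D is cyclically monotone. -/
import Mathlib


variable {X Y : Type*} [AddCommGroup X] [Module ℝ X] [AddCommGroup Y] [Module ℝ Y]

/-- `T` is `m`-monotone with respect to the pairing `b`. -/
def NMono (b : X →ₗ[ℝ] Y →ₗ[ℝ] ℝ) (T : Set (X × Y)) (m : ℕ) : Prop :=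
  ∀ p : ℕ → X × Y, (∀ i ∈ Finset.Icc 1 m, p i ∈ T) → p (m + 1) = p 1 →
    0 ≤ ∑ i ∈ Finset.Icc 1 m, b ((p i).1 - (p (i + 1)).1) (p i).2

lemma ortho_nmono (b : X →ₗ[ℝ] Y →ₗ[ℝ] ℝ) (D : Set (X × Y))
    (hskew : ∀ z ∈ D, b z.1 z.2 = 0)
    (h : ∀ z ∈ D, ∀ z' ∈ D, b z.1 z'.2 = 0) (n : ℕ) : NMono b D n := by
  intro p hp hcyc
  have key : ∀ i ∈ Finset.Icc 1 n, b ((p i).1 - (p (i + 1)).1) (p i).2 = 0 := by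
    intro i hi
    simp only [Finset.mem_Icc] at hi
    have h1 : p i ∈ D := hp i (Finset.mem_Icc.2 hi)
    have h2 : p (i + 1) ∈ D := by
      rcases eq_or_lt_of_le hi.2 with h'|h'
      · rw [h', hcyc]
        exact hp 1 (Finset.mem_Icc.2 ⟨le_refl 1, hi.1.trans hi.2⟩)
      · exact hp (i + 1) (Finset.mem_Icc.2 ⟨le_trans hi.1 (Nat.le_succ i), h'⟩)
    rw [map_sub, LinearMap.sub_apply, hskew _ h1, h _ h2 _ h1, sub_zero]
  rw [Finset.sum_congr rfl key]
  simp

lemma mono3_le (b : X →ₗ[ℝ] Y →ₗ[ℝ] ℝ) (D : Set (X × Y))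
    (hcone : ∀ t : ℝ, ∀ z ∈ D, t • z ∈ D)
    (hskew : ∀ z ∈ D, b z.1 z.2 = 0)
    (hm : NMono b D 3) {z z' : X × Y} (hz : z ∈ D) (hz' : z' ∈ D) :
    b z.1 z'.2 ≤ 0 := by
  have h0 : (0 : X × Y) ∈ D := by
    have := hcone 0 z hz
    simpa using this
  set p : ℕ → X × Y := fun i => if i = 2 then z else if i = 3 then 0 else z' with hp
  have hmem : ∀ i ∈ Finset.Icc 1 3, p i ∈ D := by
    intro i hi
    by_cases h2 : i = 2
    · simp [hp, h2, hz]
    by_cases h3 : i = 3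
    · simp [hp, h2, h3, h0]
    · simp [hp, h2, h3, hz']
  have hcyc : p (3 + 1) = p 1 := by norm_num [hp]
  have := hm p hmem hcyc
  have hIcc : Finset.Icc 1 3 = {1, 2, 3} := rfl
  rw [hIcc, show ({1, 2, 3} : Finset ℕ) = insert 1 (insert 2 {3}) from rfl,
    Finset.sum_insert (by decide), Finset.sum_insert (by decide),
    Finset.sum_singleton] at this
  norm_num [hp, map_sub, LinearMap.sub_apply, hskew z hz, hskew z' hz'] at this
  linarith

/-- A skew double-cone `D ⊆ X × Y` is `3`-monotone iff
`⟨x, y'⟩ = 0` for all `(x,y) ∈ D`, `(x',y') ∈ D` (i.e. `Pr_X(D) ⊥ Pr_Y(D)`),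
and in that case `D` is cyclically monotone. -/
theorem skew_double_cone_three_monotone_iff (b : X →ₗ[ℝ] Y →ₗ[ℝ] ℝ)
    (D : Set (X × Y))
    (hcone : ∀ t : ℝ, ∀ z ∈ D, t • z ∈ D)
    (hskew : ∀ z ∈ D, b z.1 z.2 = 0) :
    (NMono b D 3 ↔ ∀ z ∈ D, ∀ z' ∈ D, b z.1 z'.2 = 0) ∧
      (NMono b D 3 → ∀ n : ℕ, 2 ≤ n → NMono b D n) := by
  have ortho : NMono b D 3 → ∀ z ∈ D, ∀ z' ∈ D, b z.1 z'.2 = 0 := by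
    intro hm z hz z' hz'
    have h1 := mono3_le b D hcone hskew hm hz hz'
    have hzneg : (-1 : ℝ) • z ∈ D := hcone (-1) z hz
    have h2 := mono3_le b D hcone hskew hm hzneg hz'
    simp only [Prod.smul_fst, neg_one_smul, Prod.fst_neg, map_neg,
      LinearMap.neg_apply] at h2
    linarith
  refine ⟨⟨ortho, fun h => ortho_nmono b D hskew h 3⟩, fun hm n _ =>
    ortho_nmono b D hskew (ortho hm) n⟩
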